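/- The linear equation q𝔊 = (1-r)𝔉 for q has a positive solution when 0 < p < 1: with g* = (1-p)^{1/r}, 𝔊(p) = 1 + 2p(1-r)/r - g*^{2(r-1)} and 𝔉(p) = r/(1-r) + 2p + p²(2-r)/r - (r/(1-r))g*^{2(r-1)}, both 𝔊(p) and 𝔉(p) are strictly negative for 0 < p < 1, hence q* = (1-r)𝔉/𝔊 > 0. -/

import Mathlib

/-!
Put `c = 2(1 - r)/r`, so that `(1 - p) ^ (2(r - 1)/r) = (1 - p) ^ (-c)`, and
`T = 1 + c p + c(c + 1)/2 p²`. Then `𝔊 = 1 + c p - (1 - p) ^ (-c) < T - (1 - p) ^ (-c)` and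
`𝔉 = r/(1 - r) · (T - (1 - p) ^ (-c))`, so both claims reduce to the second-order binomial bound
`T < (1 - p) ^ (-c)`. That bound follows from `-log (1 - p) > p + p²/2` (the logarithmic series)
and `exp y ≥ 1 + y + y²/2` for `y ≥ 0`.
-/

open Real Finset

lemma add_sq_div_two_lt_neg_log_one_sub {p : ℝ} (hp0 : 0 < p) (hp1 : p < 1) :
    p + p ^ 2 / 2 < -log (1 - p) := by
  have hseries := hasSum_pow_div_log_of_abs_lt_one (abs_lt.2 ⟨by linarith, hp1⟩)
  have hpartial : ∑ n ∈ range 3, p ^ (n + 1) / (n + 1) ≤ -log (1 - p) :=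
    sum_le_hasSum _ (fun n _ => by positivity) hseries
  simp only [sum_range_succ, sum_range_zero] at hpartial
  norm_num at hpartial
  nlinarith [pow_pos hp0 3]

lemma one_add_mul_add_lt_one_sub_rpow_neg {c p : ℝ} (hc : 0 < c) (hp0 : 0 < p) (hp1 : p < 1) :
    1 + c * p + c * (c + 1) / 2 * p ^ 2 < (1 - p) ^ (-c) := by
  have hlog := add_sq_div_two_lt_neg_log_one_sub hp0 hp1
  have hy : c * (p + p ^ 2 / 2) < c * -log (1 - p) := mul_lt_mul_of_pos_left hlog hc
  have hy0 : 0 ≤ c * (p + p ^ 2 / 2) := by positivity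
  calc 1 + c * p + c * (c + 1) / 2 * p ^ 2
      ≤ 1 + c * (p + p ^ 2 / 2) + (c * (p + p ^ 2 / 2)) ^ 2 / 2 := by
        nlinarith [pow_pos hp0 3, pow_pos hp0 4, pow_pos hc 2]
    _ < 1 + c * -log (1 - p) + (c * -log (1 - p)) ^ 2 / 2 := by nlinarith
    _ ≤ exp (c * -log (1 - p)) := quadratic_le_exp_of_nonneg (by linarith)
    _ = (1 - p) ^ (-c) := by rw [rpow_def_of_pos (by linarith)]; ring_nf

theorem stmt_15 (r p : ℝ) (hr0 : 0 < r) (hr1 : r < 1) (hp0 : 0 < p) (hp1 : p < 1) :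
    1 + 2 * p * (1 - r) / r - (1 - p) ^ (2 * (r - 1) / r) < 0 ∧
    r / (1 - r) + 2 * p + p ^ 2 * (2 - r) / r
      - (r / (1 - r)) * (1 - p) ^ (2 * (r - 1) / r) < 0 ∧
    0 < (1 - r) * (r / (1 - r) + 2 * p + p ^ 2 * (2 - r) / r
          - (r / (1 - r)) * (1 - p) ^ (2 * (r - 1) / r))
        / (1 + 2 * p * (1 - r) / r - (1 - p) ^ (2 * (r - 1) / r)) := by
  have h1r : 0 < 1 - r := by linarith
  set c := 2 * (1 - r) / r with hc
  have hc0 : 0 < c := by positivity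
  have hexp : 2 * (r - 1) / r = -c := by ring
  rw [hexp]
  set g := (1 - p) ^ (-c)
  have hbound : 1 + c * p + c * (c + 1) / 2 * p ^ 2 - g < 0 := by
    linarith [one_add_mul_add_lt_one_sub_rpow_neg hc0 hp0 hp1]
  have hG : 1 + 2 * p * (1 - r) / r - g < 0 := by
    have hcp : 2 * p * (1 - r) / r = c * p := by ring
    have hquad : 0 < c * (c + 1) / 2 * p ^ 2 := by positivity
    rw [hcp]
    linarith
  have hF : r / (1 - r) + 2 * p + p ^ 2 * (2 - r) / r - r / (1 - r) * g < 0 := by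
    have hFT : r / (1 - r) + 2 * p + p ^ 2 * (2 - r) / r - r / (1 - r) * g
        = r / (1 - r) * (1 + c * p + c * (c + 1) / 2 * p ^ 2 - g) := by
      rw [hc]; field_simp; ring
    rw [hFT]
    exact mul_neg_of_pos_of_neg (by positivity) hbound
  exact ⟨hG, hF, div_pos_of_neg_of_neg (mul_neg_of_pos_of_neg h1r hF) hG⟩
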